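/- arXiv:1902.05027 — 3 statements merged into one kernel-verified Lean document; each statement's English description precedes it below -/
import Mathlib

section
/- Let ψ : ℝ → ℝ^d and ψ' : ℝ → ℝ^d be such that ψ' is integrable and square-integrable on the closed interval [α, β] and ψ(y) − ψ(x) = ∫_x^y ψ'(s) ds for all α ≤ x ≤ y ≤ β. Define u = sqrt( (β − α) · ∫_{[α,β]} ‖ψ'(s)‖² ds ). Then the image ψ([α, β]) is contained in the set U = { x ∈ ℝ^d : ‖ψ(α) − x‖ + ‖x − ψ(β)‖ ≤ u }. -/
open MeasureTheory Set

/- Proof idea: by the fundamental theorem of calculus and Cauchy–Schwarz, a chord of the curve over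
`[x, y]` has length at most `√((y - x) ∫_{[x,y]} ‖ψ'‖²)`. For `t ∈ [α, β]` add the bounds for the
chords over `[α, t]` and `[t, β]`; Cauchy–Schwarz in `ℝ²` shows that their sum is at most the bound
for `[α, β]`, because both the lengths and the energies of the two pieces add up. -/

theorem Real.sqrt_mul_add_sqrt_mul_le {a b A B : ℝ} (ha : 0 ≤ a) (hb : 0 ≤ b) (hA : 0 ≤ A)
    (hB : 0 ≤ B) : √(a * A) + √(b * B) ≤ √((a + b) * (A + B)) := by
  rw [Real.sqrt_mul ha, Real.sqrt_mul hb, Real.le_sqrt (by positivity) (by positivity)]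
  nlinarith [sq_nonneg (√a * √B - √b * √A), Real.sq_sqrt ha, Real.sq_sqrt hb, Real.sq_sqrt hA,
    Real.sq_sqrt hB]

theorem MeasureTheory.integral_norm_le_sqrt_measureReal_mul_integral_norm_sq
    {X E : Type*} [MeasurableSpace X] [NormedAddCommGroup E] {μ : Measure X} [IsFiniteMeasure μ]
    {f : X → E} (hf : AEStronglyMeasurable f μ) (hf2 : Integrable (fun x => ‖f x‖ ^ 2) μ) :
    ∫ x, ‖f x‖ ∂μ ≤ √(μ.real univ * ∫ x, ‖f x‖ ^ 2 ∂μ) := by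
  have hf_memLp : MemLp (fun x => ‖f x‖) (ENNReal.ofReal 2) μ := by
    rw [ENNReal.ofReal_ofNat]
    exact ((memLp_two_iff_integrable_sq_norm hf).mpr hf2).norm
  have holder := integral_mul_le_Lp_mul_Lq_of_nonneg Real.HolderConjugate.two_two
    (Filter.Eventually.of_forall fun x => norm_nonneg (f x))
    (Filter.Eventually.of_forall fun _ => zero_le_one) hf_memLp (memLp_const (1 : ℝ))
  simp only [Real.rpow_two, one_pow, mul_one, integral_const, smul_eq_mul] at holder
  rw [Real.sqrt_mul measureReal_nonneg, mul_comm, Real.sqrt_eq_rpow, Real.sqrt_eq_rpow]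
  exact holder

theorem norm_intervalIntegral_le_sqrt_mul_setIntegral_Icc_norm_sq {E : Type*}
    [NormedAddCommGroup E] [NormedSpace ℝ E] {f : ℝ → E} {x y : ℝ} (hxy : x ≤ y)
    (hf : AEStronglyMeasurable f (volume.restrict (Icc x y)))
    (hf2 : IntegrableOn (fun s => ‖f s‖ ^ 2) (Icc x y)) :
    ‖∫ s in x..y, f s‖ ≤ √((y - x) * ∫ s in Icc x y, ‖f s‖ ^ 2) := by
  calc ‖∫ s in x..y, f s‖ ≤ ∫ s in x..y, ‖f s‖ :=
        intervalIntegral.norm_integral_le_integral_norm hxy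
    _ = ∫ s in Icc x y, ‖f s‖ := by
        rw [intervalIntegral.integral_of_le hxy, integral_Icc_eq_integral_Ioc]
    _ ≤ √(volume.real (Icc x y) * ∫ s in Icc x y, ‖f s‖ ^ 2) := by
        simpa only [measureReal_restrict_apply_univ]
          using integral_norm_le_sqrt_measureReal_mul_integral_norm_sq hf hf2
    _ = √((y - x) * ∫ s in Icc x y, ‖f s‖ ^ 2) := by rw [Real.volume_real_Icc_of_le hxy]

theorem setIntegral_Icc_add_setIntegral_Icc {E : Type*} [NormedAddCommGroup E] [NormedSpace ℝ E]
    {f : ℝ → E} {a b c : ℝ} (hab : a ≤ b) (hbc : b ≤ c) (hf : IntegrableOn f (Icc a c)) :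
    (∫ x in Icc a b, f x) + ∫ x in Icc b c, f x = ∫ x in Icc a c, f x := by
  simp only [integral_Icc_eq_integral_Ioc, ← intervalIntegral.integral_of_le, hab, hbc,
    hab.trans hbc]
  refine intervalIntegral.integral_add_adjacent_intervals ?_ ?_
  · exact (intervalIntegrable_iff_integrableOn_Icc_of_le hab).mpr
      (hf.mono_set (Icc_subset_Icc_right hbc))
  · exact (intervalIntegrable_iff_integrableOn_Icc_of_le hbc).mpr
      (hf.mono_set (Icc_subset_Icc_left hab))

theorem curve_subset_convex_hull_general (d : ℕ)
    (ψ ψ' : ℝ → EuclideanSpace ℝ (Fin d)) (α β : ℝ)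
    (hint : IntegrableOn ψ' (Icc α β))
    (hint2 : IntegrableOn (fun s => ‖ψ' s‖ ^ 2) (Icc α β))
    (hftc : ∀ x y, α ≤ x → x ≤ y → y ≤ β → ψ y - ψ x = ∫ s in x..y, ψ' s) :
    ψ '' (Icc α β) ⊆
      {x : EuclideanSpace ℝ (Fin d) |
        ‖ψ α - x‖ + ‖x - ψ β‖ ≤
          Real.sqrt ((β - α) * ∫ s in Icc α β, ‖ψ' s‖ ^ 2)} := by
  rintro _ ⟨t, ⟨hαt, htβ⟩, rfl⟩
  have chord_le : ∀ x y, α ≤ x → x ≤ y → y ≤ β →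
      ‖ψ y - ψ x‖ ≤ √((y - x) * ∫ s in Icc x y, ‖ψ' s‖ ^ 2) := fun x y hx hxy hy => by
    rw [hftc x y hx hxy hy]
    exact norm_intervalIntegral_le_sqrt_mul_setIntegral_Icc_norm_sq hxy
      (hint.mono_set (Icc_subset_Icc hx hy)).aestronglyMeasurable
      (hint2.mono_set (Icc_subset_Icc hx hy))
  have energy_nonneg : ∀ x y, 0 ≤ ∫ s in Icc x y, ‖ψ' s‖ ^ 2 :=
    fun _ _ => integral_nonneg fun _ => sq_nonneg _
  calc ‖ψ α - ψ t‖ + ‖ψ t - ψ β‖ = ‖ψ t - ψ α‖ + ‖ψ β - ψ t‖ := by simp only [norm_sub_rev]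
    _ ≤ √((t - α) * ∫ s in Icc α t, ‖ψ' s‖ ^ 2) + √((β - t) * ∫ s in Icc t β, ‖ψ' s‖ ^ 2) :=
        add_le_add (chord_le α t le_rfl hαt htβ) (chord_le t β hαt htβ le_rfl)
    _ ≤ √((t - α + (β - t)) * ((∫ s in Icc α t, ‖ψ' s‖ ^ 2) + ∫ s in Icc t β, ‖ψ' s‖ ^ 2)) :=
        Real.sqrt_mul_add_sqrt_mul_le (sub_nonneg.mpr hαt) (sub_nonneg.mpr htβ)
          (energy_nonneg α t) (energy_nonneg t β)
    _ = √((β - α) * ∫ s in Icc α β, ‖ψ' s‖ ^ 2) := by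
        rw [setIntegral_Icc_add_setIntegral_Icc hαt htβ hint2, sub_add_sub_cancel']

theorem curve_subset_convex_hull (d : ℕ)
    (ψ ψ' : ℝ → EuclideanSpace ℝ (Fin d)) (α β : ℝ) (hαβ : α ≤ β)
    (hint : IntegrableOn ψ' (Icc α β))
    (hint2 : IntegrableOn (fun s => ‖ψ' s‖ ^ 2) (Icc α β))
    (hftc : ∀ x y, α ≤ x → x ≤ y → y ≤ β → ψ y - ψ x = ∫ s in x..y, ψ' s) :
    ψ '' (Icc α β) ⊆
      {x : EuclideanSpace ℝ (Fin d) |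
        ‖ψ α - x‖ + ‖x - ψ β‖ ≤
          Real.sqrt ((β - α) * ∫ s in Icc α β, ‖ψ' s‖ ^ 2)} :=
  curve_subset_convex_hull_general d ψ ψ' α β hint hint2 hftc
end

section
/- Let B ⊆ ℝ^d be a nonempty compact set, let p, q ∈ ℝ^d, let u ≥ 0, and let U = { x ∈ ℝ^d : ‖p − x‖ + ‖x − q‖ ≤ u }. Let x' ∈ U be any point of U. Then inf{ ‖x' − b‖ : b ∈ B } − inf{ ‖x − b‖ : x ∈ U, b ∈ B } ≤ u. -/
/-!
Any point `x` of `U` lies within `u` of `x'`: the triangle inequality through each focus gives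
`2‖x' - x‖ ≤ (‖p - x'‖ + ‖x' - q‖) + (‖p - x‖ + ‖x - q‖) ≤ 2u`. Hence for every `x ∈ U`, `b ∈ B`,
the distance from `x'` to `B` is at most `‖x' - b‖ ≤ u + ‖x - b‖`, and taking the infimum over
`x` and `b` bounds the lower bound from below by the upper bound minus `u`.
-/

open Metric

variable {α : Type*} [PseudoMetricSpace α]

theorem dist_le_of_dist_add_dist_le {p q x y : α} {u : ℝ} (hx : dist p x + dist x q ≤ u)
    (hy : dist p y + dist y q ≤ u) : dist x y ≤ u := by
  have via_p := dist_triangle x p y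
  have via_q := dist_triangle x q y
  rw [dist_comm x p] at via_p
  rw [dist_comm q y] at via_q
  linarith

theorem sInf_setOf_dist_eq_infDist (x : α) (B : Set α) :
    sInf {r | ∃ c ∈ B, r = dist x c} = infDist x B := by
  have h : {r | ∃ c ∈ B, r = dist x c} = dist x '' B := by
    ext
    simp [eq_comm]
  rw [h, sInf_image', infDist_eq_iInf]

theorem setOf_dist_eq_image2 (U B : Set α) :
    {r | ∃ x ∈ U, ∃ c ∈ B, r = dist x c} = Set.image2 dist U B := by
  ext
  simp [eq_comm]

theorem infDist_sub_sInf_image2_dist_le {B U : Set α} {x' : α} {u : ℝ} (hB : B.Nonempty)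
    (hx' : x' ∈ U) (hU : ∀ x ∈ U, dist x' x ≤ u) :
    infDist x' B - sInf (Set.image2 dist U B) ≤ u := by
  have hlb : infDist x' B - u ≤ sInf (Set.image2 dist U B) := by
    refine le_csInf (Set.Nonempty.image2 ⟨x', hx'⟩ hB) ?_
    rintro _ ⟨x, hx, c, hc, rfl⟩
    have := infDist_le_dist_of_mem (x := x') hc
    have := dist_triangle x' x c
    linarith [hU x hx]
  linarith

theorem dub_sub_dlb_le_u_general (d : ℕ) (B : Set (EuclideanSpace ℝ (Fin d)))
    (hBne : B.Nonempty)
    (p q : EuclideanSpace ℝ (Fin d)) (u : ℝ)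
    (x' : EuclideanSpace ℝ (Fin d)) (hx' : ‖p - x'‖ + ‖x' - q‖ ≤ u) :
    sInf {r : ℝ | ∃ c ∈ B, r = ‖x' - c‖} -
      sInf {r : ℝ | ∃ x ∈ {y : EuclideanSpace ℝ (Fin d) | ‖p - y‖ + ‖y - q‖ ≤ u},
        ∃ c ∈ B, r = ‖x - c‖} ≤ u := by
  simp only [← dist_eq_norm] at hx' ⊢
  rw [sInf_setOf_dist_eq_infDist, setOf_dist_eq_image2]
  exact infDist_sub_sInf_image2_dist_le hBne hx' fun x hx => dist_le_of_dist_add_dist_le hx' hx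

theorem dub_sub_dlb_le_u (d : ℕ) (B : Set (EuclideanSpace ℝ (Fin d)))
    (hB : IsCompact B) (hBne : B.Nonempty)
    (p q : EuclideanSpace ℝ (Fin d)) (u : ℝ) (hu : 0 ≤ u)
    (x' : EuclideanSpace ℝ (Fin d)) (hx' : ‖p - x'‖ + ‖x' - q‖ ≤ u) :
    sInf {r : ℝ | ∃ c ∈ B, r = ‖x' - c‖} -
      sInf {r : ℝ | ∃ x ∈ {y : EuclideanSpace ℝ (Fin d) | ‖p - y‖ + ‖y - q‖ ≤ u},
        ∃ c ∈ B, r = ‖x - c‖} ≤ u :=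
  dub_sub_dlb_le_u_general d B hBne p q u x' hx'
end

section
/- Let ψ : ℝ → ℝ^d and ψ' : ℝ → ℝ^d be such that ψ' is integrable and square-integrable on a compact interval I = [a, b] and ψ(y) − ψ(x) = ∫_x^y ψ'(s) ds for all a ≤ x ≤ y ≤ b. Let B ⊆ ℝ^d be a nonempty compact set. For a closed sub-interval Q = [α, β] ⊆ I, let u_ψ(Q) = sqrt( (β − α) ∫_Q ‖ψ'(s)‖² ds ), let U_Q = { x : ‖ψ(α) − x‖ + ‖x − ψ(β)‖ ≤ u_ψ(Q) }, let d_lb(Q) = inf{ ‖x − b‖ : x ∈ U_Q, b ∈ B }, and let d_ub(Q) = inf{ ‖ψ((α+β)/2) − b‖ : b ∈ B }. Then for every ε > 0 there exists δ > 0 such that for every closed sub-interval Q = [α, β] ⊆ I with β − α < δ, one has d_ub(Q) − d_lb(Q) < ε. -/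
/-!
Write `m = (α + β) / 2` and `u = u_ψ(Q)`. By the fundamental theorem of calculus and
Cauchy–Schwarz, `‖ψ α - ψ m‖ + ‖ψ m - ψ β‖ ≤ ∫_Q ‖ψ'‖ ≤ u`, so `ψ m ∈ U_Q`. Any two points of
`U_Q` are at distance at most `u` (triangle inequality through each focus), so moving from a
point of `U_Q` to `ψ m` changes the distance to `B` by at most `u`, whence `d_ub - d_lb ≤ u`.
Finally `u² ≤ |Q| ∫_I ‖ψ'‖²`, which is small uniformly in `Q`.
-/
open MeasureTheory Set

theorem integral_norm_le_sqrt_measureReal_mul_integral_sq {α E : Type*} [MeasurableSpace α]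
    [NormedAddCommGroup E] {μ : Measure α} [IsFiniteMeasure μ] {f : α → E} (hf : MemLp f 2 μ) :
    ∫ x, ‖f x‖ ∂μ ≤ √(μ.real univ * ∫ x, ‖f x‖ ^ 2 ∂μ) := by
  have holder := integral_mul_le_Lp_mul_Lq_of_nonneg Real.HolderConjugate.two_two
    (ae_of_all μ fun x => norm_nonneg (f x)) (ae_of_all μ fun _ => zero_le_one)
    (by simpa using hf.norm) (memLp_const (1 : ℝ))
  simp only [integral_const, smul_eq_mul, Real.rpow_ofNat, one_pow, mul_one] at holder
  rw [Real.sqrt_eq_rpow, Real.mul_rpow measureReal_nonneg (integral_nonneg fun _ => by positivity),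
    mul_comm]
  exact holder

theorem setIntegral_Icc_norm_le_sqrt_mul_setIntegral_sq {E : Type*} [NormedAddCommGroup E]
    {f : ℝ → E} {α β : ℝ} (hαβ : α ≤ β) (hf : AEStronglyMeasurable f (volume.restrict (Icc α β)))
    (hf2 : IntegrableOn (fun s => ‖f s‖ ^ 2) (Icc α β)) :
    ∫ s in Icc α β, ‖f s‖ ≤ √((β - α) * ∫ s in Icc α β, ‖f s‖ ^ 2) := by
  simpa [Real.volume_real_Icc_of_le hαβ] using
    integral_norm_le_sqrt_measureReal_mul_integral_sq ((memLp_two_iff_integrable_sq_norm hf).2 hf2)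

theorem norm_sub_le_integral_norm_of_eq_integral {E : Type*} [NormedAddCommGroup E]
    [NormedSpace ℝ E] {ψ ψ' : ℝ → E} {x y : ℝ} (hxy : x ≤ y)
    (hftc : ψ y - ψ x = ∫ s in x..y, ψ' s) :
    ‖ψ x - ψ y‖ ≤ ∫ s in x..y, ‖ψ' s‖ := by
  rw [norm_sub_rev, hftc]
  exact intervalIntegral.norm_integral_le_integral_norm hxy

theorem norm_sub_le_of_norm_add_norm_le {E : Type*} [SeminormedAddCommGroup E] {f₁ f₂ x y : E}
    {u : ℝ} (hx : ‖f₁ - x‖ + ‖x - f₂‖ ≤ u) (hy : ‖f₁ - y‖ + ‖y - f₂‖ ≤ u) : ‖x - y‖ ≤ u := by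
  have h₁ := norm_sub_le_norm_sub_add_norm_sub x f₁ y
  have h₂ := norm_sub_le_norm_sub_add_norm_sub x f₂ y
  rw [norm_sub_rev x f₁] at h₁
  rw [norm_sub_rev f₂ y] at h₂
  linarith

theorem sInf_norm_sub_sub_sInf_norm_sub_le {E : Type*} [SeminormedAddCommGroup E] {p : E}
    {U B : Set E} {r : ℝ} (hp : p ∈ U) (hU : ∀ x ∈ U, ‖p - x‖ ≤ r) (hB : B.Nonempty) :
    sInf {s | ∃ c ∈ B, s = ‖p - c‖} - sInf {s | ∃ x ∈ U, ∃ c ∈ B, s = ‖x - c‖} ≤ r := by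
  obtain ⟨c₀, hc₀⟩ := hB
  have hbdd : BddBelow {s | ∃ c ∈ B, s = ‖p - c‖} := ⟨0, by rintro _ ⟨c, -, rfl⟩; positivity⟩
  suffices sInf {s | ∃ c ∈ B, s = ‖p - c‖} - r ≤ sInf {s | ∃ x ∈ U, ∃ c ∈ B, s = ‖x - c‖} by
    linarith
  refine le_csInf ⟨_, p, hp, c₀, hc₀, rfl⟩ ?_
  rintro _ ⟨x, hx, c, hc, rfl⟩
  calc sInf {s | ∃ c ∈ B, s = ‖p - c‖} - r ≤ ‖p - c‖ - ‖p - x‖ := by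
        gcongr
        · exact csInf_le hbdd ⟨c, hc, rfl⟩
        · exact hU x hx
    _ ≤ ‖x - c‖ := by linarith [norm_sub_le_norm_sub_add_norm_sub p x c]

theorem norm_sub_add_norm_sub_le_setIntegral_norm {E : Type*} [NormedAddCommGroup E]
    [NormedSpace ℝ E] {ψ ψ' : ℝ → E} {α m β : ℝ} (hαm : α ≤ m) (hmβ : m ≤ β)
    (hψ' : IntegrableOn ψ' (Icc α β))
    (hftc : ∀ x y, α ≤ x → x ≤ y → y ≤ β → ψ y - ψ x = ∫ s in x..y, ψ' s) :
    ‖ψ α - ψ m‖ + ‖ψ m - ψ β‖ ≤ ∫ s in Icc α β, ‖ψ' s‖ := by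
  have hii : ∀ x y, α ≤ x → x ≤ y → y ≤ β → IntervalIntegrable (fun s => ‖ψ' s‖) volume x y :=
    fun x y hx hxy hy => (intervalIntegrable_iff_integrableOn_Icc_of_le hxy).2
      (IntegrableOn.mono_set hψ'.norm (Icc_subset_Icc hx hy))
  rw [integral_Icc_eq_integral_Ioc, ← intervalIntegral.integral_of_le (hαm.trans hmβ),
    ← intervalIntegral.integral_add_adjacent_intervals (hii α m le_rfl hαm hmβ)
      (hii m β hαm hmβ le_rfl)]
  gcongr
  · exact norm_sub_le_integral_norm_of_eq_integral hαm (hftc α m le_rfl hαm hmβ)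
  · exact norm_sub_le_integral_norm_of_eq_integral hmβ (hftc m β hαm hmβ le_rfl)

theorem exists_pos_forall_mul_setIntegral_Icc_lt {g : ℝ → ℝ} {a b : ℝ}
    (hg : IntegrableOn g (Icc a b)) (hg0 : ∀ s, 0 ≤ g s) {ε : ℝ} (hε : 0 < ε) :
    ∃ δ > 0, ∀ α β, a ≤ α → α ≤ β → β ≤ b → β - α < δ →
      (β - α) * ∫ s in Icc α β, g s < ε := by
  set C := ∫ s in Icc a b, g s
  have hC : 0 ≤ C := integral_nonneg hg0
  refine ⟨ε / (C + 1), by positivity, fun α β haα hαβ hβb hδ => ?_⟩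
  have hsub : Icc α β ⊆ Icc a b := Icc_subset_Icc haα hβb
  have hmono : ∫ s in Icc α β, g s ≤ C :=
    setIntegral_mono_set hg (ae_of_all _ hg0) hsub.eventuallyLE
  calc (β - α) * ∫ s in Icc α β, g s ≤ (β - α) * (C + 1) := by
        gcongr
        linarith
    _ < ε / (C + 1) * (C + 1) := by gcongr
    _ = ε := by field_simp

theorem uniform_convergence_general (d : ℕ)
    (ψ ψ' : ℝ → EuclideanSpace ℝ (Fin d)) (a b : ℝ)
    (hint : IntegrableOn ψ' (Icc a b))
    (hint2 : IntegrableOn (fun s => ‖ψ' s‖ ^ 2) (Icc a b))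
    (hftc : ∀ x y, a ≤ x → x ≤ y → y ≤ b → ψ y - ψ x = ∫ s in x..y, ψ' s)
    (B : Set (EuclideanSpace ℝ (Fin d))) (hBne : B.Nonempty) :
    ∀ ε > 0, ∃ δ > 0, ∀ α β : ℝ, α ≤ β → a ≤ α → β ≤ b → β - α < δ →
      sInf {r : ℝ | ∃ c ∈ B, r = ‖ψ ((α + β) / 2) - c‖} -
        sInf {r : ℝ | ∃ x ∈ {y : EuclideanSpace ℝ (Fin d) |
            ‖ψ α - y‖ + ‖y - ψ β‖ ≤
              Real.sqrt ((β - α) * ∫ s in Icc α β, ‖ψ' s‖ ^ 2)},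
          ∃ c ∈ B, r = ‖x - c‖} < ε := by
  intro ε hε
  obtain ⟨δ, hδ, hsmall⟩ := exists_pos_forall_mul_setIntegral_Icc_lt hint2
    (fun s => sq_nonneg ‖ψ' s‖) (pow_pos hε 2)
  refine ⟨δ, hδ, fun α β hαβ haα hβb hβα => ?_⟩
  set u := √((β - α) * ∫ s in Icc α β, ‖ψ' s‖ ^ 2)
  have hsub : Icc α β ⊆ Icc a b := Icc_subset_Icc haα hβb
  have hu : u < ε := (Real.sqrt_lt_sqrt (by positivity) (hsmall α β haα hαβ hβb hβα)).trans_eq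
    (Real.sqrt_sq hε.le)
  have hmid : ‖ψ α - ψ ((α + β) / 2)‖ + ‖ψ ((α + β) / 2) - ψ β‖ ≤ u :=
    (norm_sub_add_norm_sub_le_setIntegral_norm (by linarith) (by linarith) (hint.mono_set hsub)
      fun x y hx hxy hy => hftc x y (haα.trans hx) hxy (hy.trans hβb)).trans
    (setIntegral_Icc_norm_le_sqrt_mul_setIntegral_sq hαβ (hint.mono_set hsub).aestronglyMeasurable
      (hint2.mono_set hsub))
  refine (sInf_norm_sub_sub_sInf_norm_sub_le ?_ ?_ hBne).trans_lt hu
  · exact hmid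
  · exact fun x hx => norm_sub_le_of_norm_add_norm_le hmid hx

theorem uniform_convergence (d : ℕ)
    (ψ ψ' : ℝ → EuclideanSpace ℝ (Fin d)) (a b : ℝ) (hab : a ≤ b)
    (hint : IntegrableOn ψ' (Icc a b))
    (hint2 : IntegrableOn (fun s => ‖ψ' s‖ ^ 2) (Icc a b))
    (hftc : ∀ x y, a ≤ x → x ≤ y → y ≤ b → ψ y - ψ x = ∫ s in x..y, ψ' s)
    (B : Set (EuclideanSpace ℝ (Fin d))) (hB : IsCompact B) (hBne : B.Nonempty) :
    ∀ ε > 0, ∃ δ > 0, ∀ α β : ℝ, α ≤ β → a ≤ α → β ≤ b → β - α < δ →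
      sInf {r : ℝ | ∃ c ∈ B, r = ‖ψ ((α + β) / 2) - c‖} -
        sInf {r : ℝ | ∃ x ∈ {y : EuclideanSpace ℝ (Fin d) |
            ‖ψ α - y‖ + ‖y - ψ β‖ ≤
              Real.sqrt ((β - α) * ∫ s in Icc α β, ‖ψ' s‖ ^ 2)},
          ∃ c ∈ B, r = ‖x - c‖} < ε :=
  uniform_convergence_general d ψ ψ' a b hint hint2 hftc B hBne
end
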